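/- arXiv:2510.02799 — 6 statements merged into one kernel-verified Lean document; each statement's English description precedes it below -/
import Mathlib

section
/- For any vectors a, b ∈ ℝ^p, the nuclear norm of the symmetric matrix a aᵀ − b bᵀ equals ‖a − b‖ · ‖a + b‖, where the nuclear norm of a symmetric matrix is the sum of the absolute values of its eigenvalues. -/
open scoped BigOperators

open Matrix Finset in
private lemma matrix_rank_add_le {n : ℕ} (A B : Matrix (Fin n) (Fin n) ℝ) :
    (A + B).rank ≤ A.rank + B.rank := by
  rw [Matrix.rank, Matrix.rank, Matrix.rank, Matrix.mulVecLin_add]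
  calc Module.finrank ℝ ↥(LinearMap.range (A.mulVecLin + B.mulVecLin))
      ≤ Module.finrank ℝ ↥(LinearMap.range A.mulVecLin ⊔ LinearMap.range B.mulVecLin) := by
        apply Submodule.finrank_mono
        rintro x ⟨v, rfl⟩
        exact Submodule.mem_sup.2 ⟨_, ⟨v, rfl⟩, _, ⟨v, rfl⟩, rfl⟩
    _ ≤ _ := Submodule.finrank_add_le_finrank_add_finrank _ _

private lemma rank_vecMulVec_le {n : ℕ} (u v : Fin n → ℝ) :
    (Matrix.vecMulVec u v).rank ≤ 1 := by
  rw [Matrix.vecMulVec_eq Unit]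
  exact (Matrix.rank_mul_le_right _ _).trans
    ((Matrix.rank_le_card_height _).trans (by simp))

private lemma sum_eigs {n : ℕ} {A : Matrix (Fin n) (Fin n) ℝ} (hA : A.IsHermitian) :
    ∑ i, hA.eigenvalues i = A.trace := by
  nth_rewrite 2 [hA.spectral_theorem]
  rw [Unitary.conjStarAlgAut_apply, Matrix.trace_mul_cycle, Unitary.coe_star_mul_self, Matrix.one_mul, Matrix.trace_diagonal]
  simp

private lemma sum_eigs_sq {n : ℕ} {A : Matrix (Fin n) (Fin n) ℝ} (hA : A.IsHermitian) :
    ∑ i, hA.eigenvalues i ^ 2 = (A * A).trace := by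
  have h1 : star (hA.eigenvectorUnitary : Matrix (Fin n) (Fin n) ℝ)
      * (hA.eigenvectorUnitary : Matrix (Fin n) (Fin n) ℝ) = 1 := Unitary.coe_star_mul_self _
  have h2 : A * A = (hA.eigenvectorUnitary : Matrix (Fin n) (Fin n) ℝ)
      * (Matrix.diagonal (RCLike.ofReal ∘ hA.eigenvalues)
        * Matrix.diagonal (RCLike.ofReal ∘ hA.eigenvalues))
      * star (hA.eigenvectorUnitary : Matrix (Fin n) (Fin n) ℝ) := by
    conv_lhs => rw [hA.spectral_theorem, Unitary.conjStarAlgAut_apply]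
    simp only [Matrix.mul_assoc]
    rw [← Matrix.mul_assoc (star (hA.eigenvectorUnitary : Matrix (Fin n) (Fin n) ℝ))
      (hA.eigenvectorUnitary : Matrix (Fin n) (Fin n) ℝ), h1, Matrix.one_mul]
  rw [h2, Matrix.trace_mul_cycle, ← Matrix.mul_assoc, h1, Matrix.one_mul,
    Matrix.diagonal_mul_diagonal, Matrix.trace_diagonal]
  simp [sq]

private lemma abs_sum_sq {n : ℕ} (f : Fin n → ℝ)
    (hcard : (Finset.univ.filter fun i => f i ≠ 0).card ≤ 2)
    (hle : (∑ i, f i) ^ 2 ≤ ∑ i, f i ^ 2) :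
    (∑ i, |f i|) ^ 2 = 2 * (∑ i, f i ^ 2) - (∑ i, f i) ^ 2 := by
  set S := Finset.univ.filter fun i => f i ≠ 0 with hS
  have h0 : ∀ i ∈ Finset.univ, i ∉ S → f i = 0 := fun i _ hi => by
    by_contra h; exact hi (Finset.mem_filter.2 ⟨Finset.mem_univ i, h⟩)
  have e1 : ∑ i, f i = ∑ i ∈ S, f i :=
    (Finset.sum_subset (Finset.filter_subset _ _) fun i hi hni => h0 i hi hni).symm
  have e2 : ∑ i, f i ^ 2 = ∑ i ∈ S, f i ^ 2 :=
    (Finset.sum_subset (Finset.filter_subset _ _) fun i hi hni => by rw [h0 i hi hni]; ring).symm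
  have e3 : ∑ i, |f i| = ∑ i ∈ S, |f i| :=
    (Finset.sum_subset (Finset.filter_subset _ _) fun i hi hni => by rw [h0 i hi hni]; simp).symm
  rw [e1, e2] at hle ⊢
  rw [e3]
  have hc : S.card = 0 ∨ S.card = 1 ∨ S.card = 2 := by omega
  rcases hc with h | h | h
  · rw [Finset.card_eq_zero] at h
    simp [h]
  · obtain ⟨i, hi⟩ := Finset.card_eq_one.1 h
    rw [hi, Finset.sum_singleton, Finset.sum_singleton, Finset.sum_singleton]
    nlinarith [sq_abs (f i)]
  · obtain ⟨i, j, hij, hij2⟩ := Finset.card_eq_two.1 h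
    rw [hij2] at hle ⊢
    simp only [Finset.sum_pair hij] at hle ⊢
    set x := f i
    set y := f j
    have hxy : x * y ≤ 0 := by nlinarith
    have habs : |x| * |y| = -(x * y) := by rw [← abs_mul, abs_of_nonpos hxy]
    nlinarith [sq_abs x, sq_abs y]

/-- For a, b ∈ ℝ^p, the nuclear norm (sum of absolute values of eigenvalues)
of the symmetric matrix a aᵀ − b bᵀ equals ‖a − b‖ · ‖a + b‖. -/
theorem nuclear_norm_rank_two (p : ℕ) (a b : EuclideanSpace ℝ (Fin p))
    (hA : (Matrix.of fun i j => a i * a j - b i * b j : Matrix (Fin p) (Fin p) ℝ).IsHermitian) :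
    ∑ i, |hA.eigenvalues i| = ‖a - b‖ * ‖a + b‖ := by
  classical
  set M : Matrix (Fin p) (Fin p) ℝ := Matrix.of fun i j => a i * a j - b i * b j with hM
  set na := ∑ i, a i ^ 2 with hna
  set nb := ∑ i, b i ^ 2 with hnb
  set c := ∑ i, a i * b i with hc
  have hcs : c ^ 2 ≤ na * nb := Finset.sum_mul_sq_le_sq_mul_sq _ _ _
  -- trace
  have htr : M.trace = na - nb := by
    rw [hna, hnb, ← Finset.sum_sub_distrib]
    refine Finset.sum_congr rfl fun i _ => ?_
    simp [hM]
    ring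
  -- trace of square
  have htr2 : (M * M).trace = na ^ 2 + nb ^ 2 - 2 * c ^ 2 := by
    have step : (M * M).trace = ∑ i, ∑ j, M i j * M j i := by
      simp [Matrix.trace, Matrix.diag, Matrix.mul_apply]
    rw [step]
    have inner : ∀ i, ∑ j, M i j * M j i
        = a i ^ 2 * na + b i ^ 2 * nb - 2 * (a i * b i) * c := by
      intro i
      rw [hna, hnb, hc, Finset.mul_sum, Finset.mul_sum, Finset.mul_sum,
        ← Finset.sum_add_distrib, ← Finset.sum_sub_distrib]
      refine Finset.sum_congr rfl fun j _ => ?_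
      simp [hM]
      ring
    rw [Finset.sum_congr rfl fun i _ => inner i, Finset.sum_sub_distrib,
      Finset.sum_add_distrib, ← Finset.sum_mul, ← Finset.sum_mul, ← Finset.sum_mul,
      ← Finset.mul_sum, ← hna, ← hnb, ← hc]
    ring
  -- rank bound
  have hrank : M.rank ≤ 2 := by
    have hdecomp : M = Matrix.vecMulVec (fun i => a i) (fun i => a i)
        + Matrix.vecMulVec (fun i => -(b i)) (fun i => b i) := by
      ext i j
      simp [hM, Matrix.vecMulVec_apply]
      ring
    rw [hdecomp]
    calc (Matrix.vecMulVec (fun i => a i) (fun i => a i)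
        + Matrix.vecMulVec (fun i => -(b i)) (fun i => b i)).rank
        ≤ _ + _ := matrix_rank_add_le _ _
      _ ≤ 1 + 1 := add_le_add (rank_vecMulVec_le _ _) (rank_vecMulVec_le _ _)
  have hcard : (Finset.univ.filter fun i => hA.eigenvalues i ≠ 0).card ≤ 2 := by
    have h1 := hA.rank_eq_card_non_zero_eigs
    rw [Fintype.card_subtype] at h1
    omega
  have hsum : ∑ i, hA.eigenvalues i = na - nb := by rw [sum_eigs hA, htr]
  have hsumsq : ∑ i, hA.eigenvalues i ^ 2 = na ^ 2 + nb ^ 2 - 2 * c ^ 2 := by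
    rw [sum_eigs_sq hA, htr2]
  have hle : (∑ i, hA.eigenvalues i) ^ 2 ≤ ∑ i, hA.eigenvalues i ^ 2 := by
    rw [hsum, hsumsq]; nlinarith
  have key := abs_sum_sq _ hcard hle
  rw [hsum, hsumsq] at key
  have hnorm1 : ‖a - b‖ ^ 2 = na - 2 * c + nb := by
    rw [EuclideanSpace.norm_eq, Real.sq_sqrt (Finset.sum_nonneg fun i _ => sq_nonneg _)]
    rw [hna, hnb, hc, Finset.mul_sum, ← Finset.sum_sub_distrib, ← Finset.sum_add_distrib]
    refine Finset.sum_congr rfl fun i _ => ?_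
    simp [Real.norm_eq_abs, sq_abs]
    ring
  have hnorm2 : ‖a + b‖ ^ 2 = na + 2 * c + nb := by
    rw [EuclideanSpace.norm_eq, Real.sq_sqrt (Finset.sum_nonneg fun i _ => sq_nonneg _)]
    rw [hna, hnb, hc, Finset.mul_sum, ← Finset.sum_add_distrib, ← Finset.sum_add_distrib]
    refine Finset.sum_congr rfl fun i _ => ?_
    simp [Real.norm_eq_abs, sq_abs]
    ring
  have hprod : (‖a - b‖ * ‖a + b‖) ^ 2 = 2 * (na ^ 2 + nb ^ 2 - 2 * c ^ 2) - (na - nb) ^ 2 := by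
    rw [mul_pow, hnorm1, hnorm2]; ring
  have h1 : (0:ℝ) ≤ ∑ i, |hA.eigenvalues i| := Finset.sum_nonneg fun i _ => abs_nonneg _
  have h2 : (0:ℝ) ≤ ‖a - b‖ * ‖a + b‖ := mul_nonneg (norm_nonneg _) (norm_nonneg _)
  rw [← Real.sqrt_sq h1, key, ← hprod, Real.sqrt_sq h2]
end

section
/- For any X, v₁, v₂ ∈ ℝ^p, | ‖X − v₁‖·‖X + v₁‖ − ‖X − v₂‖·‖X + v₂‖ | ≤ ‖v₁ + v₂‖ · ‖v₁ − v₂‖. -/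
open RealInnerProductSpace

variable {E : Type*} [NormedAddCommGroup E] [InnerProductSpace ℝ E]

private lemma refl_inner_le (n : E) (hn : n ≠ 0) (x y : E) :
    2 * ⟪n, x⟫ * ⟪n, y⟫ / ‖n‖ ^ 2 - ⟪x, y⟫ ≤ ‖x‖ * ‖y‖ := by
  have hn2 : (0:ℝ) < ‖n‖ ^ 2 := pow_pos (norm_pos_iff.mpr hn) 2
  set c : ℝ := 2 * ⟪n, x⟫ / ‖n‖ ^ 2 with hc
  have hQ : ‖c • n - x‖ ^ 2 = ‖x‖ ^ 2 := by
    rw [norm_sub_sq_real, real_inner_smul_left, norm_smul]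
    rw [mul_pow, Real.norm_eq_abs, sq_abs, hc]
    field_simp
    ring
  have hQ' : ‖c • n - x‖ = ‖x‖ := by
    have := congrArg Real.sqrt hQ
    rwa [Real.sqrt_sq (norm_nonneg _), Real.sqrt_sq (norm_nonneg _)] at this
  have h := real_inner_le_norm (c • n - x) y
  rw [inner_sub_left, real_inner_smul_left, hQ'] at h
  calc 2 * ⟪n, x⟫ * ⟪n, y⟫ / ‖n‖ ^ 2 - ⟪x, y⟫
      = c * ⟪n, y⟫ - ⟪x, y⟫ := by rw [hc]; ring
    _ ≤ ‖x‖ * ‖y‖ := h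

private lemma inner_sub_add_self (x y : E) : ⟪x - y, x + y⟫ = ‖x‖^2 - ‖y‖^2 := by
  rw [inner_sub_left, inner_add_right, inner_add_right,
    real_inner_self_eq_norm_sq, real_inner_self_eq_norm_sq, real_inner_comm y x]
  ring

private lemma step (X v₁ v₂ : E) :
    ‖X - v₁‖ * ‖X + v₁‖ ≤ ‖X - v₂‖ * ‖X + v₂‖ + ‖v₂ - v₁‖ * ‖v₂ + v₁‖ := by
  rcases eq_or_ne (X - v₁) 0 with ha | ha
  · rw [ha, norm_zero, zero_mul]
    positivity
  rcases eq_or_ne (X + v₁) 0 with hb | hb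
  · rw [hb, norm_zero, mul_zero]
    positivity
  have ha' : (0:ℝ) < ‖X - v₁‖ := norm_pos_iff.mpr ha
  have hb' : (0:ℝ) < ‖X + v₁‖ := norm_pos_iff.mpr hb
  set a : ℝ := ‖X - v₁‖ with hadef
  set b : ℝ := ‖X + v₁‖ with hbdef
  set n : E := a⁻¹ • (X - v₁) + b⁻¹ • (X + v₁) with hndef
  rcases eq_or_ne n 0 with hn | hn
  · -- degenerate case: unit (X - v₁) = - unit (X + v₁)
    have h0 : a⁻¹ • (X - v₁) = - (b⁻¹ • (X + v₁)) := by
      rw [← add_eq_zero_iff_eq_neg, ← hndef, hn]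
    have hxy : X - v₁ = -((a * b⁻¹) • (X + v₁)) := by
      have h1 := congrArg (fun z : E => a • z) h0
      simp only [smul_smul, smul_neg] at h1
      rwa [mul_inv_cancel₀ (ne_of_gt ha'), one_smul] at h1
    have hab : a * b = ‖v₁‖^2 - ‖X‖^2 := by
      have h1 : ⟪X - v₁, X + v₁⟫ = -((a * b⁻¹) * ‖X + v₁‖^2) := by
        rw [hxy, inner_neg_left, real_inner_smul_left, real_inner_self_eq_norm_sq]
      rw [inner_sub_add_self, ← hbdef] at h1
      have h2 : (a * b⁻¹) * b^2 = a * b := by field_simp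
      nlinarith [h1, h2]
    have h2 : ‖v₂‖^2 - ‖X‖^2 ≤ ‖X - v₂‖ * ‖X + v₂‖ := by
      have h := real_inner_le_norm (v₂ - X) (v₂ + X)
      rw [inner_sub_add_self, norm_sub_rev, add_comm v₂ X] at h
      exact h
    have h3 : ‖v₁‖^2 - ‖v₂‖^2 ≤ ‖v₂ - v₁‖ * ‖v₂ + v₁‖ := by
      have h := real_inner_le_norm (v₁ - v₂) (v₁ + v₂)
      rw [inner_sub_add_self, norm_sub_rev, add_comm v₁ v₂] at h
      exact h
    linarith
  · -- main case: reflection across n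
    have h2 := refl_inner_le n hn (X - v₂) (X + v₂)
    have h3 := refl_inner_le n hn (v₂ - v₁) (v₂ + v₁)
    have hn1 : ⟪n, X - v₁⟫ = a⁻¹ * (a * a) + b⁻¹ * ⟪X - v₁, X + v₁⟫ := by
      rw [hndef, inner_add_left, real_inner_smul_left, real_inner_smul_left,
        real_inner_self_eq_norm_mul_norm, real_inner_comm (X + v₁) (X - v₁), ← hadef]
    have hn2 : ⟪n, X + v₁⟫ = a⁻¹ * ⟪X - v₁, X + v₁⟫ + b⁻¹ * (b * b) := by
      rw [hndef, inner_add_left, real_inner_smul_left, real_inner_smul_left,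
        real_inner_self_eq_norm_mul_norm, ← hbdef]
    have hnn : ‖n‖^2 = a⁻¹ * ⟪n, X - v₁⟫ + b⁻¹ * ⟪n, X + v₁⟫ := by
      rw [← real_inner_self_eq_norm_sq]
      nth_rewrite 1 [hndef]
      rw [inner_add_left, real_inner_smul_left, real_inner_smul_left,
        real_inner_comm (X - v₁) n, real_inner_comm (X + v₁) n]
    rw [hn1, hn2] at hnn
    have hnpos : (0:ℝ) < ‖n‖^2 := pow_pos (norm_pos_iff.mpr hn) 2
    have habpos : (0:ℝ) < a * b := mul_pos ha' hb'
    have hnn2 : ‖n‖^2 = 2 * (a * b + ⟪X - v₁, X + v₁⟫) / (a * b) := by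
      rw [hnn]
      field_simp
      ring
    have habip : (0:ℝ) < a * b + ⟪X - v₁, X + v₁⟫ := by
      rw [hnn2] at hnpos
      have h' := mul_pos hnpos habpos
      rw [div_mul_cancel₀ _ (ne_of_gt habpos)] at h'
      linarith
    have h1 : 2 * ⟪n, X - v₁⟫ * ⟪n, X + v₁⟫ / ‖n‖^2 - ⟪X - v₁, X + v₁⟫ = a * b := by
      rw [hn1, hn2, hnn2]
      field_simp
      ring
    have h4 : 2 * ⟪n, X - v₁⟫ * ⟪n, X + v₁⟫ / ‖n‖^2 - ⟪X - v₁, X + v₁⟫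
        = (2 * ⟪n, X - v₂⟫ * ⟪n, X + v₂⟫ / ‖n‖^2 - ⟪X - v₂, X + v₂⟫)
          + (2 * ⟪n, v₂ - v₁⟫ * ⟪n, v₂ + v₁⟫ / ‖n‖^2 - ⟪v₂ - v₁, v₂ + v₁⟫) := by
      simp only [inner_sub_left, inner_sub_right, inner_add_left, inner_add_right,
        real_inner_comm]
      ring
    linarith

/-- |‖X − v₁‖‖X + v₁‖ − ‖X − v₂‖‖X + v₂‖| ≤ ‖v₁ + v₂‖‖v₁ − v₂‖. -/
theorem lipschitz_bound (p : ℕ) (X v₁ v₂ : EuclideanSpace ℝ (Fin p)) :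
    |‖X - v₁‖ * ‖X + v₁‖ - ‖X - v₂‖ * ‖X + v₂‖| ≤ ‖v₁ + v₂‖ * ‖v₁ - v₂‖ := by
  rw [abs_sub_le_iff]
  constructor
  · have h := step X v₁ v₂
    rw [norm_sub_rev v₂ v₁, add_comm v₂ v₁, mul_comm ‖v₁ - v₂‖ ‖v₁ + v₂‖] at h
    linarith
  · have h := step X v₂ v₁
    rw [mul_comm ‖v₁ - v₂‖ ‖v₁ + v₂‖] at h
    linarith
end

section
/- Define τ(λ, p) = (λ²/2) ∫₀^∞ (1 + λ²x)^{−3/2} (1 + x)^{(1−p)/2} dx for λ > 1 and integer p ≥ 2. Then for p = 2, τ(λ, 2) = λ/(λ + 1). -/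
open MeasureTheory

noncomputable def tau (l : ℝ) (p : ℕ) : ℝ :=
  l ^ 2 / 2 * ∫ x in Set.Ioi (0 : ℝ),
    (1 + l ^ 2 * x) ^ (-(3 : ℝ) / 2) * (1 + x) ^ ((1 - (p : ℝ)) / 2)

lemma tau_key (l : ℝ) (hl : 1 < l) :
    ∫ x in Set.Ioi (0 : ℝ),
      (1 + l ^ 2 * x) ^ (-(3 : ℝ) / 2) * (1 + x) ^ (-(1 : ℝ) / 2)
    = 2 / (1 - l ^ 2) * l⁻¹ - 2 / (1 - l ^ 2) := by
  have hl0 : (0 : ℝ) < l := lt_trans one_pos hl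
  have hl2 : (1 : ℝ) < l ^ 2 := by nlinarith
  have hne : (1 : ℝ) - l ^ 2 ≠ 0 := by nlinarith
  set g : ℝ → ℝ := fun x => 2 / (1 - l ^ 2) *
    ((1 + x) ^ ((1 : ℝ) / 2) * (1 + l ^ 2 * x) ^ (-(1 : ℝ) / 2)) with hg
  have hderiv : ∀ x ∈ Set.Ici (0 : ℝ), HasDerivAt g
      ((1 + l ^ 2 * x) ^ (-(3 : ℝ) / 2) * (1 + x) ^ (-(1 : ℝ) / 2)) x := by
    intro x hx
    have hx0 : (0 : ℝ) ≤ x := hx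
    have hu : (0 : ℝ) < 1 + x := by linarith
    have hv : (0 : ℝ) < 1 + l ^ 2 * x := by nlinarith
    have d1 : HasDerivAt (fun y : ℝ => (1 + y) ^ ((1 : ℝ) / 2))
        (1 * (1 / 2) * (1 + x) ^ ((1 : ℝ) / 2 - 1)) x :=
      ((hasDerivAt_id x).const_add 1).rpow_const (Or.inl hu.ne')
    have d2 : HasDerivAt (fun y : ℝ => (1 + l ^ 2 * y) ^ (-(1 : ℝ) / 2))
        (l ^ 2 * (-1 / 2) * (1 + l ^ 2 * x) ^ (-(1 : ℝ) / 2 - 1)) x := by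
      have : HasDerivAt (fun y : ℝ => 1 + l ^ 2 * y) (l ^ 2) x := by
        simpa using ((hasDerivAt_id x).const_mul (l ^ 2)).const_add 1
      exact this.rpow_const (Or.inl hv.ne')
    have hmul := (d1.mul d2).const_mul (2 / (1 - l ^ 2))
    convert hmul using 1
    case e'_4 => rfl
    case e'_5 => rfl
    case e'_8 => rfl
    have e1 : (1 + x) ^ ((1 : ℝ) / 2 - 1) = (1 + x) ^ (-(1 : ℝ) / 2) := by norm_num
    have e2 : (1 + l ^ 2 * x) ^ (-(1 : ℝ) / 2 - 1) = (1 + l ^ 2 * x) ^ (-(3 : ℝ) / 2) := by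
      norm_num
    have e3 : (1 + x) ^ ((1 : ℝ) / 2) = (1 + x) * (1 + x) ^ (-(1 : ℝ) / 2) := by
      rw [← Real.rpow_one_add' hu.le (by norm_num)]; norm_num
    have e4 : (1 + l ^ 2 * x) ^ (-(1 : ℝ) / 2) =
        (1 + l ^ 2 * x) * (1 + l ^ 2 * x) ^ (-(3 : ℝ) / 2) := by
      rw [← Real.rpow_one_add' hv.le (by norm_num)]; norm_num
    rw [e1, e2, e3, e4]
    field_simp
    ring
  have hpos : ∀ x ∈ Set.Ioi (0 : ℝ),
      (0 : ℝ) ≤ (1 + l ^ 2 * x) ^ (-(3 : ℝ) / 2) * (1 + x) ^ (-(1 : ℝ) / 2) := by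
    intro x hx
    have hx0 : (0 : ℝ) < x := hx
    have hu : (0 : ℝ) < 1 + x := by linarith
    have hv : (0 : ℝ) < 1 + l ^ 2 * x := by nlinarith
    positivity
  have hlim : Filter.Tendsto g Filter.atTop (nhds (2 / (1 - l ^ 2) * l⁻¹)) := by
    have h1 : Filter.Tendsto (fun x : ℝ => (1 + x) / (1 + l ^ 2 * x)) Filter.atTop
        (nhds ((l ^ 2)⁻¹)) := by
      have : Filter.Tendsto (fun x : ℝ => (x⁻¹ + 1) / (x⁻¹ + l ^ 2)) Filter.atTop
          (nhds ((0 + 1) / (0 + l ^ 2))) := by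
        apply Filter.Tendsto.div
        · exact tendsto_inv_atTop_zero.add tendsto_const_nhds
        · exact tendsto_inv_atTop_zero.add tendsto_const_nhds
        · positivity
      rw [zero_add, zero_add, one_div] at this
      refine this.congr' ?_
      filter_upwards [Filter.eventually_gt_atTop (0 : ℝ)] with x hx
      have hx' : x ≠ 0 := hx.ne'
      field_simp
    have h2 : Filter.Tendsto (fun x : ℝ => ((1 + x) / (1 + l ^ 2 * x)) ^ ((1 : ℝ) / 2))
        Filter.atTop (nhds (((l ^ 2)⁻¹) ^ ((1 : ℝ) / 2))) := by
      have hc : ContinuousAt (fun y : ℝ => y ^ ((1 : ℝ) / 2)) ((l ^ 2)⁻¹) :=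
        Real.continuousAt_rpow_const _ _ (Or.inl (by positivity))
      exact hc.tendsto.comp h1
    have hsq : (l ^ 2 : ℝ) ^ ((1 : ℝ) / 2) = l := by
      rw [← Real.rpow_natCast l 2, ← Real.rpow_mul hl0.le]
      norm_num
    have hval : ((l ^ 2)⁻¹ : ℝ) ^ ((1 : ℝ) / 2) = l⁻¹ := by
      rw [Real.inv_rpow (by positivity), hsq]
    rw [hval] at h2
    have h3 : Filter.Tendsto
        (fun x : ℝ => (1 + x) ^ ((1 : ℝ) / 2) * (1 + l ^ 2 * x) ^ (-(1 : ℝ) / 2))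
        Filter.atTop (nhds l⁻¹) := by
      refine h2.congr' ?_
      filter_upwards [Filter.eventually_gt_atTop (0 : ℝ)] with x hx
      have hu : (0 : ℝ) < 1 + x := by linarith
      have hv : (0 : ℝ) < 1 + l ^ 2 * x := by nlinarith
      rw [Real.div_rpow hu.le hv.le,
        show (-1 : ℝ) / 2 = -(1 / 2) by norm_num, Real.rpow_neg hv.le, div_eq_mul_inv]
    exact h3.const_mul _
  have key := integral_Ioi_of_hasDerivAt_of_nonneg'
      (g := g) (a := (0 : ℝ)) hderiv hpos hlim
  rw [key, hg]
  norm_num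

/-- τ(λ, 2) = λ/(λ + 1). -/
theorem tau_two (l : ℝ) (hl : 1 < l) : tau l 2 = l / (l + 1) := by
  have hl0 : (0 : ℝ) < l := lt_trans one_pos hl
  have h : ((1 : ℝ) - (2 : ℕ)) / 2 = -(1 : ℝ) / 2 := by norm_num
  rw [tau, show ((2 : ℕ) : ℝ) = 2 by norm_num]
  rw [show (fun x : ℝ => (1 + l ^ 2 * x) ^ (-(3 : ℝ) / 2) * (1 + x) ^ ((1 - (2:ℝ)) / 2))
      = fun x : ℝ => (1 + l ^ 2 * x) ^ (-(3 : ℝ) / 2) * (1 + x) ^ (-(1 : ℝ) / 2) by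
    funext x; norm_num]
  rw [tau_key l hl]
  have h1 : (1 : ℝ) - l ^ 2 ≠ 0 := by nlinarith
  have h2 : l + 1 ≠ 0 := by positivity
  field_simp
  ring
end

section
/- Define τ(λ, p) = (λ²/2) ∫₀^∞ (1 + λ²x)^{−3/2} (1 + x)^{(1−p)/2} dx for λ > 1. Then for p = 3, τ(λ, 3) = (λ²/(λ² − 1)) · (1 − arccos(1/λ)/√(λ² − 1)). -/
open MeasureTheory

/-- τ(λ, 3) = (λ²/(λ² − 1))(1 − arccos(1/λ)/√(λ² − 1)). -/
theorem tau_three (l : ℝ) (hl : 1 < l) :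
    tau l 3 = l ^ 2 / (l ^ 2 - 1) *
      (1 - Real.arccos (1 / l) / Real.sqrt (l ^ 2 - 1)) := by
  have hl0 : 0 < l := lt_trans one_pos hl
  have ha2 : (0:ℝ) < l ^ 2 - 1 := by nlinarith
  set a : ℝ := Real.sqrt (l ^ 2 - 1) with ha_def
  have ha : 0 < a := Real.sqrt_pos.mpr ha2
  have hasq : a ^ 2 = l ^ 2 - 1 := Real.sq_sqrt ha2.le
  set g : ℝ → ℝ := fun x => (Real.sqrt (1 + l ^ 2 * x) ^ 3)⁻¹ * (1 + x)⁻¹ with hg_def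
  set F : ℝ → ℝ := fun x => 2 / a ^ 2 *
      (-(Real.sqrt (1 + l ^ 2 * x))⁻¹
        - a⁻¹ * Real.arctan (Real.sqrt (1 + l ^ 2 * x) / a)) with hF_def
  -- derivative
  have hderiv : ∀ x ∈ Set.Ici (0:ℝ), HasDerivAt F (g x) x := by
    intro x hx
    have hx0 : (0:ℝ) ≤ x := hx
    have hy : (0:ℝ) < 1 + l ^ 2 * x := by positivity
    set u : ℝ := Real.sqrt (1 + l ^ 2 * x) with hu_def
    have hu : 0 < u := Real.sqrt_pos.mpr hy
    have hu2 : u ^ 2 = 1 + l ^ 2 * x := Real.sq_sqrt hy.le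
    have hin : HasDerivAt (fun x : ℝ => 1 + l ^ 2 * x) (l ^ 2) x := by
      simpa using ((hasDerivAt_id x).const_mul (l ^ 2)).const_add 1
    have hsq : HasDerivAt (fun x : ℝ => Real.sqrt (1 + l ^ 2 * x))
        (1 / (2 * u) * l ^ 2) x :=
      (Real.hasDerivAt_sqrt (ne_of_gt hy)).comp x hin
    have hd1 : HasDerivAt (fun x : ℝ => (Real.sqrt (1 + l ^ 2 * x))⁻¹)
        (-(1 / (2 * u) * l ^ 2) / u ^ 2) x := hsq.inv (ne_of_gt hu)
    have hd2 : HasDerivAt (fun x : ℝ => Real.arctan (Real.sqrt (1 + l ^ 2 * x) / a))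
        (1 / (1 + (u / a) ^ 2) * (1 / (2 * u) * l ^ 2 / a)) x :=
      by have h := (Real.hasDerivAt_arctan (u / a)).comp x (hsq.div_const a); exact h
    have hF : HasDerivAt F
        (2 / a ^ 2 * (-(-(1 / (2 * u) * l ^ 2) / u ^ 2)
          - a⁻¹ * (1 / (1 + (u / a) ^ 2) * (1 / (2 * u) * l ^ 2 / a)))) x :=
      ((hd1.neg.sub (hd2.const_mul a⁻¹)).const_mul (2 / a ^ 2))
    convert hF using 1
    have hx1 : 1 + x = (u ^ 2 + a ^ 2) / l ^ 2 := by
      rw [hu2, hasq]; field_simp; ring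
    rw [hg_def]
    simp only [← hu_def]
    rw [hx1]
    have hua : u ^ 2 + a ^ 2 ≠ 0 := by positivity
    field_simp
    ring
  have hcont : ContinuousWithinAt F (Set.Ici (0:ℝ)) 0 :=
    (hderiv 0 (by simp)).continuousAt.continuousWithinAt
  -- nonneg
  have hpos : ∀ x ∈ Set.Ioi (0:ℝ), 0 ≤ g x := by
    intro x hx
    have hx0 : (0:ℝ) < x := hx
    have hy : (0:ℝ) < 1 + l ^ 2 * x := by positivity
    have hy1 : (0:ℝ) < 1 + x := by positivity
    have hu : 0 < Real.sqrt (1 + l ^ 2 * x) := Real.sqrt_pos.mpr hy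
    rw [hg_def]
    positivity
  -- limit
  have hlim : Filter.Tendsto F Filter.atTop (nhds (2 / a ^ 2 * (-0 - a⁻¹ * (Real.pi / 2)))) := by
    have h1 : Filter.Tendsto (fun x : ℝ => 1 + l ^ 2 * x) Filter.atTop Filter.atTop :=
      Filter.tendsto_atTop_add_const_left _ _
        (Filter.Tendsto.const_mul_atTop (by positivity) Filter.tendsto_id)
    have hu : Filter.Tendsto (fun x : ℝ => Real.sqrt (1 + l ^ 2 * x)) Filter.atTop
        Filter.atTop := by
      apply Filter.tendsto_atTop_atTop.mpr
      intro b
      refine ⟨b ^ 2 / l ^ 2, fun x hx => ?_⟩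
      have h2 : b ^ 2 ≤ x * l ^ 2 := (div_le_iff₀ (by positivity)).mp hx
      calc b ≤ √(b ^ 2) := by rw [Real.sqrt_sq_eq_abs]; exact le_abs_self b
        _ ≤ √(1 + l ^ 2 * x) := Real.sqrt_le_sqrt (by nlinarith)
    have hinv : Filter.Tendsto (fun x : ℝ => (Real.sqrt (1 + l ^ 2 * x))⁻¹) Filter.atTop
        (nhds 0) := hu.inv_tendsto_atTop
    have harc : Filter.Tendsto
        (fun x : ℝ => Real.arctan (Real.sqrt (1 + l ^ 2 * x) / a)) Filter.atTop
        (nhds (Real.pi / 2)) :=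
      (Real.tendsto_arctan_atTop.mono_right nhdsWithin_le_nhds).comp (hu.atTop_div_const ha)
    exact ((hinv.neg.sub (harc.const_mul a⁻¹)).const_mul (2 / a ^ 2))
  have key : ∫ x in Set.Ioi (0:ℝ), g x
      = (2 / a ^ 2 * (-0 - a⁻¹ * (Real.pi / 2))) - F 0 :=
    integral_Ioi_of_hasDerivAt_of_nonneg hcont (fun x hx => hderiv x (Set.mem_Ici.mpr (le_of_lt hx))) hpos hlim
  -- rewrite tau integrand as g
  have hint : (∫ x in Set.Ioi (0:ℝ),
      (1 + l ^ 2 * x) ^ (-(3 : ℝ) / 2) * (1 + x) ^ ((1 - ((3:ℕ) : ℝ)) / 2))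
      = ∫ x in Set.Ioi (0:ℝ), g x := by
    apply setIntegral_congr_fun measurableSet_Ioi
    intro x hx
    have hx0 : (0:ℝ) < x := hx
    have hy : (0:ℝ) < 1 + l ^ 2 * x := by positivity
    have hx1 : (0:ℝ) < 1 + x := by positivity
    have h3 : (1 + l ^ 2 * x) ^ (-(3 : ℝ) / 2) = (Real.sqrt (1 + l ^ 2 * x) ^ 3)⁻¹ := by
      rw [show Real.sqrt (1 + l ^ 2 * x) ^ 3 = (1 + l ^ 2 * x) ^ ((3:ℝ)/2) from ?_,
        ← Real.rpow_neg hy.le, neg_div]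
      rw [Real.sqrt_eq_rpow, ← Real.rpow_natCast ((1 + l ^ 2 * x) ^ ((1:ℝ)/2)) 3,
        ← Real.rpow_mul hy.le]
      norm_num
    have h1 : (1 + x) ^ ((1 - ((3:ℕ) : ℝ)) / 2) = (1 + x)⁻¹ := by
      rw [show (1 - ((3:ℕ) : ℝ)) / 2 = -1 by norm_num, Real.rpow_neg_one]
    simp only [hg_def]
    rw [h3, h1]
  -- arccos and arctan identities
  have harccos : Real.arccos (1 / l) = Real.arctan a := by
    rw [Real.arccos_eq_arctan (by positivity)]
    congr 1
    rw [show 1 - (1 / l) ^ 2 = (l ^ 2 - 1) / l ^ 2 by field_simp,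
      Real.sqrt_div ha2.le, Real.sqrt_sq hl0.le]
    field_simp
    exact ha_def.symm
  have harctaninv : Real.arctan a⁻¹ = Real.pi / 2 - Real.arctan a :=
    Real.arctan_inv_of_pos ha
  have hF0 : F 0 = 2 / a ^ 2 * (-1 - a⁻¹ * (Real.pi / 2 - Real.arctan a)) := by
    have h1 : Real.sqrt (1 + l ^ 2 * 0) = 1 := by norm_num
    rw [hF_def]
    simp only [h1, inv_one, one_div, harctaninv]
  rw [show tau l 3 = l ^ 2 / 2 * ∫ x in Set.Ioi (0 : ℝ),
      (1 + l ^ 2 * x) ^ (-(3 : ℝ) / 2) * (1 + x) ^ ((1 - ((3:ℕ) : ℝ)) / 2) from rfl,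
    hint, key, hF0, harccos, ← hasq]
  field_simp
  ring
end

section
/- Fix n points X₁, …, X_n ∈ ℝ^p and define the sample objective f(v) = (1/n) Σ_i ‖X_i − v‖·‖X_i + v‖ and, for v ≠ ±X_i for all i, the Weiszfeld update T(v) = (Σ_i β_i(v) X_i)/(Σ_i γ_i(v)), where β_i(v) = (‖v + X_i‖² − ‖v − X_i‖²)/(‖v − X_i‖‖v + X_i‖) and γ_i(v) = (‖v + X_i‖² + ‖v − X_i‖²)/(‖v − X_i‖‖v + X_i‖). Then f(T(v)) ≤ f(v), with equality if and only if T(v) = v. -/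
/-!
The objective is majorized by `h(·, v)`, the weighted sum of squared distances from `u` to the
`2n` points `∓X i` with weights `‖v ∓ X i‖ / ‖v ± X i‖`: termwise AM-GM gives `2 f ≤ h(·, v)`,
with equality at `v`. By the parallel axis theorem `h(·, v)` exceeds its value at the barycenter
`T(v)` of those weighted points by `(∑ i, γ i) ‖u - T(v)‖²`, so
`2 f(T v) + (∑ i, γ i) ‖v - T v‖² ≤ h(T v, v) + (∑ i, γ i) ‖v - T v‖² = h(v, v) = 2 f(v)`.
-/

open scoped BigOperators RealInnerProductSpace

section ParallelAxis

variable {ι E : Type*} [Fintype ι] [NormedAddCommGroup E] [InnerProductSpace ℝ E]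

theorem sum_mul_norm_sub_sq_eq_of_barycenter (w : ι → ℝ) (y : ι → E) {m : E}
    (hm : (∑ i, w i) • m = ∑ i, w i • y i) (u : E) :
    ∑ i, w i * ‖u - y i‖ ^ 2 = ∑ i, w i * ‖m - y i‖ ^ 2 + (∑ i, w i) * ‖u - m‖ ^ 2 := by
  have hcross : ∑ i, w i * ⟪u - m, m - y i⟫ = 0 := by
    simp_rw [← real_inner_smul_right, ← inner_sum, smul_sub, Finset.sum_sub_distrib,
      ← Finset.sum_smul, hm, sub_self, inner_zero_right]
  have hsplit : ∀ i, ‖u - y i‖ ^ 2 = ‖u - m‖ ^ 2 + 2 * ⟪u - m, m - y i⟫ + ‖m - y i‖ ^ 2 := by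
    intro i
    rw [← norm_add_sq_real, sub_add_sub_cancel]
  simp_rw [hsplit, mul_add, Finset.sum_add_distrib, mul_left_comm _ (2 : ℝ), ← Finset.mul_sum,
    hcross, ← Finset.sum_mul]
  ring

end ParallelAxis

theorem two_mul_mul_le_div_mul_sq_add_div_mul_sq {p q : ℝ} (hp : 0 < p) (hq : 0 < q) (x y : ℝ) :
    2 * (x * y) ≤ p / q * x ^ 2 + q / p * y ^ 2 := by
  have h : p / q * x ^ 2 + q / p * y ^ 2 - 2 * (x * y) = (p * x - q * y) ^ 2 / (p * q) := by
    field_simp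
    ring
  have : 0 ≤ (p * x - q * y) ^ 2 / (p * q) := by positivity
  linarith

namespace Weiszfeld

variable {ι E : Type*} [NormedAddCommGroup E] {X : ι → E} {v : E}

theorem norm_sub_pos (hv : ∀ i, v ≠ X i ∧ v ≠ -X i) (i : ι) : 0 < ‖v - X i‖ :=
  norm_pos_iff.2 (sub_ne_zero.2 (hv i).1)

theorem norm_add_pos (hv : ∀ i, v ≠ X i ∧ v ≠ -X i) (i : ι) : 0 < ‖v + X i‖ :=
  norm_pos_iff.2 fun h => (hv i).2 (eq_neg_iff_add_eq_zero.2 h)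

noncomputable def beta (X : ι → E) (v : E) (i : ι) : ℝ :=
  (‖v + X i‖ ^ 2 - ‖v - X i‖ ^ 2) / (‖v - X i‖ * ‖v + X i‖)

noncomputable def gamma (X : ι → E) (v : E) (i : ι) : ℝ :=
  (‖v + X i‖ ^ 2 + ‖v - X i‖ ^ 2) / (‖v - X i‖ * ‖v + X i‖)

theorem gamma_pos (hv : ∀ i, v ≠ X i ∧ v ≠ -X i) (i : ι) : 0 < gamma X v i :=
  have := norm_sub_pos hv i
  have := norm_add_pos hv i
  by unfold gamma; positivity

theorem sum_gamma_pos [Fintype ι] [Nonempty ι] (hv : ∀ i, v ≠ X i ∧ v ≠ -X i) :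
    0 < ∑ i, gamma X v i :=
  Finset.sum_pos (fun i _ => gamma_pos hv i) Finset.univ_nonempty

/-- `inl i` stands for the point `-X i`, `inr i` for `X i`. -/
def node (X : ι → E) : ι ⊕ ι → E := Sum.elim (fun i => -X i) X

noncomputable def weight (X : ι → E) (v : E) : ι ⊕ ι → ℝ :=
  Sum.elim (fun i => ‖v - X i‖ / ‖v + X i‖) (fun i => ‖v + X i‖ / ‖v - X i‖)

variable [Fintype ι]

def objective (X : ι → E) (w : E) : ℝ := ∑ i, ‖X i - w‖ * ‖X i + w‖

noncomputable def majorizer (X : ι → E) (v u : E) : ℝ :=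
  ∑ j, weight X v j * ‖u - node X j‖ ^ 2

theorem sum_weight (hv : ∀ i, v ≠ X i ∧ v ≠ -X i) :
    ∑ j, weight X v j = ∑ i, gamma X v i := by
  rw [Fintype.sum_sum_type, ← Finset.sum_add_distrib]
  refine Finset.sum_congr rfl fun i _ => ?_
  have := (norm_sub_pos hv i).ne'
  have := (norm_add_pos hv i).ne'
  simp only [weight, gamma, Sum.elim_inl, Sum.elim_inr]
  field_simp
  ring

theorem two_mul_objective_le_majorizer (hv : ∀ i, v ≠ X i ∧ v ≠ -X i) (u : E) :
    2 * objective X u ≤ majorizer X v u := by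
  rw [majorizer, Fintype.sum_sum_type, ← Finset.sum_add_distrib, objective, Finset.mul_sum]
  refine Finset.sum_le_sum fun i _ => ?_
  simp only [weight, node, Sum.elim_inl, Sum.elim_inr, sub_neg_eq_add, add_comm u, norm_sub_rev u]
  rw [mul_comm ‖X i - u‖]
  exact two_mul_mul_le_div_mul_sq_add_div_mul_sq (norm_sub_pos hv i) (norm_add_pos hv i) _ _

theorem majorizer_self (hv : ∀ i, v ≠ X i ∧ v ≠ -X i) :
    majorizer X v v = 2 * objective X v := by
  rw [majorizer, Fintype.sum_sum_type, ← Finset.sum_add_distrib, objective, Finset.mul_sum]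
  refine Finset.sum_congr rfl fun i _ => ?_
  have := (norm_sub_pos hv i).ne'
  have := (norm_add_pos hv i).ne'
  simp only [weight, node, Sum.elim_inl, Sum.elim_inr, sub_neg_eq_add, norm_sub_rev (X i),
    add_comm (X i)]
  field_simp
  ring

variable [InnerProductSpace ℝ E]

noncomputable def update (X : ι → E) (v : E) : E :=
  (∑ i, gamma X v i)⁻¹ • ∑ i, beta X v i • X i

theorem sum_weight_smul_node (hv : ∀ i, v ≠ X i ∧ v ≠ -X i) :
    ∑ j, weight X v j • node X j = ∑ i, beta X v i • X i := by
  rw [Fintype.sum_sum_type, ← Finset.sum_add_distrib]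
  refine Finset.sum_congr rfl fun i _ => ?_
  have := (norm_sub_pos hv i).ne'
  have := (norm_add_pos hv i).ne'
  simp only [weight, node, beta, Sum.elim_inl, Sum.elim_inr, smul_neg, neg_add_eq_sub, ← sub_smul]
  congr 1
  field_simp

theorem two_mul_objective_update_add_le [Nonempty ι] (hv : ∀ i, v ≠ X i ∧ v ≠ -X i) :
    2 * objective X (update X v) + (∑ i, gamma X v i) * ‖v - update X v‖ ^ 2 ≤
      2 * objective X v := by
  have hbary : (∑ j, weight X v j) • update X v = ∑ j, weight X v j • node X j := by
    rw [sum_weight hv, sum_weight_smul_node hv, update,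
      smul_inv_smul₀ (sum_gamma_pos hv).ne']
  have hsplit := sum_mul_norm_sub_sq_eq_of_barycenter _ _ hbary v
  rw [sum_weight hv] at hsplit
  calc 2 * objective X (update X v) + (∑ i, gamma X v i) * ‖v - update X v‖ ^ 2
      ≤ majorizer X v (update X v) + (∑ i, gamma X v i) * ‖v - update X v‖ ^ 2 := by
        gcongr; exact two_mul_objective_le_majorizer hv _
    _ = majorizer X v v := hsplit.symm
    _ = 2 * objective X v := majorizer_self hv

theorem objective_update_le [Nonempty ι] (hv : ∀ i, v ≠ X i ∧ v ≠ -X i) :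
    objective X (update X v) ≤ objective X v := by
  have := two_mul_objective_update_add_le hv
  have : 0 ≤ (∑ i, gamma X v i) * ‖v - update X v‖ ^ 2 :=
    mul_nonneg (sum_gamma_pos hv).le (sq_nonneg _)
  linarith

theorem objective_update_eq_iff [Nonempty ι] (hv : ∀ i, v ≠ X i ∧ v ≠ -X i) :
    objective X (update X v) = objective X v ↔ update X v = v := by
  refine ⟨fun heq => ?_, fun h => by rw [h]⟩
  have hdescent := two_mul_objective_update_add_le hv
  have : (∑ i, gamma X v i) * ‖v - update X v‖ ^ 2 ≤ 0 := by linarith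
  have : ‖v - update X v‖ ^ 2 = 0 :=
    le_antisymm (nonpos_of_mul_nonpos_right this (sum_gamma_pos hv)) (sq_nonneg _)
  exact (sub_eq_zero.1 (norm_eq_zero.1 (pow_eq_zero_iff two_ne_zero |>.1 this))).symm

end Weiszfeld

open Weiszfeld in
/-- The Weiszfeld update T decreases the objective
f(v) = (1/n)Σ‖X_i − v‖‖X_i + v‖, with equality iff T(v) = v. -/
theorem weiszfeld_descent (d n : ℕ) (hn : 0 < n)
    (X : Fin n → EuclideanSpace ℝ (Fin d)) (v : EuclideanSpace ℝ (Fin d))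
    (hv : ∀ i, v ≠ X i ∧ v ≠ -X i) :
    let f : EuclideanSpace ℝ (Fin d) → ℝ := fun w =>
      (1 / n) * ∑ i, ‖X i - w‖ * ‖X i + w‖
    let β : Fin n → ℝ := fun i =>
      (‖v + X i‖ ^ 2 - ‖v - X i‖ ^ 2) / (‖v - X i‖ * ‖v + X i‖)
    let γ : Fin n → ℝ := fun i =>
      (‖v + X i‖ ^ 2 + ‖v - X i‖ ^ 2) / (‖v - X i‖ * ‖v + X i‖)
    let T : EuclideanSpace ℝ (Fin d) := (∑ i, γ i)⁻¹ • ∑ i, β i • X i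
    f T ≤ f v ∧ (f T = f v ↔ T = v) := by
  intro f β γ T
  have : Nonempty (Fin n) := ⟨⟨0, hn⟩⟩
  have hscale : (0 : ℝ) < 1 / n := by positivity
  change 1 / n * objective X (update X v) ≤ 1 / n * objective X v ∧
    (1 / n * objective X (update X v) = 1 / n * objective X v ↔ update X v = v)
  rw [mul_right_inj' hscale.ne', mul_le_mul_iff_right₀ hscale]
  exact ⟨objective_update_le hv, objective_update_eq_iff hv⟩
end

section
/- Fix n points X₁, …, X_n ∈ ℝ^p and let T be the Weiszfeld update map T(v) = (Σ_i β_i(v) X_i)/(Σ_i γ_i(v)) with β_i, γ_i as above, defined for v ≠ ±X_i for all i. If T(v) = −v, then v = 0. -/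
open scoped BigOperators
open scoped InnerProductSpace

/-- If the Weiszfeld update satisfies T(v) = −v, then v = 0. -/
theorem weiszfeld_fixed_negation (d n : ℕ) (hn : 0 < n)
    (X : Fin n → EuclideanSpace ℝ (Fin d)) (v : EuclideanSpace ℝ (Fin d))
    (hv : ∀ i, v ≠ X i ∧ v ≠ -X i) :
    let β : Fin n → ℝ := fun i =>
      (‖v + X i‖ ^ 2 - ‖v - X i‖ ^ 2) / (‖v - X i‖ * ‖v + X i‖)
    let γ : Fin n → ℝ := fun i =>
      (‖v + X i‖ ^ 2 + ‖v - X i‖ ^ 2) / (‖v - X i‖ * ‖v + X i‖)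
    (∑ i, γ i)⁻¹ • (∑ i, β i • X i) = -v → v = 0 := by
  intro β γ h
  by_contra hv0
  have hvpos : 0 < ‖v‖ := norm_pos_iff.mpr hv0
  have hA : ∀ i, 0 < ‖v + X i‖ := by
    intro i
    rw [norm_pos_iff]
    intro h0
    exact (hv i).2 (eq_neg_of_add_eq_zero_left h0)
  have hB : ∀ i, 0 < ‖v - X i‖ := by
    intro i
    rw [norm_pos_iff]
    exact sub_ne_zero.mpr (hv i).1
  have hγ : ∀ i, 0 < γ i := fun i =>
    div_pos (add_pos (pow_pos (hA i) 2) (pow_pos (hB i) 2)) (mul_pos (hB i) (hA i))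
  have hS : 0 < ∑ i, γ i :=
    Finset.sum_pos (fun i _ => hγ i) (Finset.univ_nonempty_iff.mpr ⟨⟨0, hn⟩⟩)
  have hM : ∑ i, β i • X i = (∑ i, γ i) • (-v) := by
    rw [← h, smul_inv_smul₀ (ne_of_gt hS)]
  have hinner : (∑ i, β i * ⟪X i, v⟫_ℝ) = -((∑ i, γ i) * ‖v‖ ^ 2) := by
    have h1 : ⟪∑ i, β i • X i, v⟫_ℝ = ⟪(∑ i, γ i) • (-v), v⟫_ℝ := by rw [hM]
    rw [sum_inner] at h1
    simp only [real_inner_smul_left, inner_neg_left, real_inner_self_eq_norm_sq] at h1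
    linarith [h1]
  have key : ∀ i, 0 < β i * ⟪X i, v⟫_ℝ + γ i * ‖v‖ ^ 2 := by
    intro i
    have h1 : ‖v + X i‖ ^ 2 = ‖v‖ ^ 2 + 2 * ⟪v, X i⟫_ℝ + ‖X i‖ ^ 2 := by
      exact norm_add_sq_real _ _
    have h2 : ‖v - X i‖ ^ 2 = ‖v‖ ^ 2 - 2 * ⟪v, X i⟫_ℝ + ‖X i‖ ^ 2 := by
      exact norm_sub_sq_real _ _
    have hcomm : ⟪X i, v⟫_ℝ = ⟪v, X i⟫_ℝ := real_inner_comm _ _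
    have hXnn : (0:ℝ) ≤ ‖X i‖ ^ 2 := by positivity
    show 0 < (‖v + X i‖ ^ 2 - ‖v - X i‖ ^ 2) / (‖v - X i‖ * ‖v + X i‖) * ⟪X i, v⟫_ℝ
        + (‖v + X i‖ ^ 2 + ‖v - X i‖ ^ 2) / (‖v - X i‖ * ‖v + X i‖) * ‖v‖ ^ 2
    rw [div_mul_eq_mul_div, div_mul_eq_mul_div, ← add_div]
    apply div_pos _ (mul_pos (hB i) (hA i))
    rw [h1, h2, hcomm]
    nlinarith [sq_nonneg (⟪v, X i⟫_ℝ), sq_nonneg (‖v‖ ^ 2), pow_pos hvpos 2]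
  have hsum : 0 < ∑ i, (β i * ⟪X i, v⟫_ℝ + γ i * ‖v‖ ^ 2) :=
    Finset.sum_pos (fun i _ => key i) (Finset.univ_nonempty_iff.mpr ⟨⟨0, hn⟩⟩)
  rw [Finset.sum_add_distrib, ← Finset.sum_mul, hinner] at hsum
  linarith
end
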